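/- arXiv:2503.20390 — 2 statements merged into one kernel-verified Lean document; each statement's English description precedes it below -/
import Mathlib

section
/- Let b : ℝ → ℝ be continuously differentiable and 1-periodic, let β, γ ∈ ℝ, and set r := β + γ·b. Suppose φ⁺ : ℝ → ℝ is twice continuously differentiable, 1-periodic, positive on ℝ, and satisfies φ⁺'' + b φ⁺' + r φ⁺ = k⁺ φ⁺ on ℝ for some k⁺ ∈ ℝ, and suppose φ⁻ : ℝ → ℝ is twice continuously differentiable, 1-periodic, positive on ℝ, and satisfies φ⁻'' − b φ⁻' + r φ⁻ = k⁻ φ⁻ on ℝ for some k⁻ ∈ ℝ. Then k⁺ = k⁻. -/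
/-!
Write `κ = β + γ²`, `ν = φ⁺' + γφ⁺` and `μ = φ⁻' - γφ⁻`. Since `r = β + γb`, the operators factor
as `L± = (D ± (b - γ))(D ± γ) + κ`, so the eigenvalue equations become `ν' = (k⁺ - κ)φ⁺ - (b - γ)ν`
and `μ' = (k⁻ - κ)φ⁻ + (b - γ)μ`. Hence the periodic function `F = (k⁺ - κ)φ⁺φ⁻ - νμ` satisfies
`F' = (k⁺ - k⁻)φ⁻ν`, and at every critical point of `F` we get `F'' = (k⁺ - k⁻)(k⁺ - κ)φ⁺φ⁻`.
Comparing the signs of `F''` at a maximum and at a minimum of `F` gives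
`(k⁺ - k⁻)(k⁺ - κ) = 0`, and by the symmetry `(b, γ, φ⁺) ↔ (-b, -γ, φ⁻)` also
`(k⁻ - k⁺)(k⁻ - κ) = 0`. Adding the two, `(k⁺ - k⁻)² = 0`.
-/

open Filter Topology

theorem Function.Periodic.deriv {f : ℝ → ℝ} {c : ℝ} (hf : Function.Periodic f c) :
    Function.Periodic (deriv f) c := fun x => by
  rw [← deriv_comp_add_const, hf.funext]

theorem IsLocalMax.deriv_deriv_nonpos {f : ℝ → ℝ} {a : ℝ} (h : IsLocalMax f a)
    (hc : ContinuousAt f a) : deriv (deriv f) a ≤ 0 := by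
  by_contra! hpos
  have hconst : f =ᶠ[𝓝 a] fun _ => f a := by
    filter_upwards [h, isLocalMin_of_deriv_deriv_pos hpos h.deriv_eq_zero hc] with x hmax hmin
    exact le_antisymm hmax hmin
  rw [hconst.deriv.deriv_eq, deriv_const', deriv_const] at hpos
  exact hpos.false

theorem IsLocalMin.deriv_deriv_nonneg {f : ℝ → ℝ} {a : ℝ} (h : IsLocalMin f a)
    (hc : ContinuousAt f a) : 0 ≤ deriv (deriv f) a := by
  simpa [deriv.neg'] using h.neg.deriv_deriv_nonpos hc.neg

theorem eq_zero_of_periodic_of_deriv_deriv_eq_mul {F Q : ℝ → ℝ} {c κ : ℝ}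
    (hper : Function.Periodic F c) (hc : c ≠ 0) (hF : Continuous F) (hQ : ∀ x, 0 < Q x)
    (hcrit : ∀ x, deriv F x = 0 → deriv (deriv F) x = κ * Q x) : κ = 0 := by
  have hrange := hper.compact_of_continuous hc hF
  obtain ⟨_, ⟨x₀, rfl⟩, hx₀⟩ := hrange.exists_isGreatest (Set.range_nonempty F)
  obtain ⟨_, ⟨x₁, rfl⟩, hx₁⟩ := hrange.exists_isLeast (Set.range_nonempty F)
  have hmax : IsLocalMax F x₀ := Eventually.of_forall fun y => hx₀ ⟨y, rfl⟩
  have hmin : IsLocalMin F x₁ := Eventually.of_forall fun y => hx₁ ⟨y, rfl⟩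
  have h₀ := hmax.deriv_deriv_nonpos hF.continuousAt
  have h₁ := hmin.deriv_deriv_nonneg hF.continuousAt
  rw [hcrit x₀ hmax.deriv_eq_zero] at h₀
  rw [hcrit x₁ hmin.deriv_eq_zero] at h₁
  exact le_antisymm (nonpos_of_mul_nonpos_left h₀ (hQ x₀))
    (nonneg_of_mul_nonneg_left h₁ (hQ x₁))

theorem hasDerivAt_deriv_add_mul {b φ : ℝ → ℝ} {β γ k x : ℝ} (hφ : DifferentiableAt ℝ φ x)
    (hφ' : DifferentiableAt ℝ (deriv φ) x)
    (heq : deriv (deriv φ) x + b x * deriv φ x + (β + γ * b x) * φ x = k * φ x) :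
    HasDerivAt (fun y => deriv φ y + γ * φ y)
      ((k - (β + γ ^ 2)) * φ x - (b x - γ) * (deriv φ x + γ * φ x)) x :=
  (hφ'.hasDerivAt.add (hφ.hasDerivAt.const_mul γ)).congr_deriv (by linear_combination heq)

theorem sub_mul_sub_eq_zero_of_periodic_eigenfunctions {b φp φm : ℝ → ℝ} {β γ c kp km : ℝ}
    (hc : c ≠ 0)
    (hφp : Differentiable ℝ φp) (hφp' : Differentiable ℝ (deriv φp))
    (hφpper : Function.Periodic φp c) (hφppos : ∀ x, 0 < φp x)
    (heqp : ∀ x, deriv (deriv φp) x + b x * deriv φp x + (β + γ * b x) * φp x = kp * φp x)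
    (hφm : Differentiable ℝ φm) (hφm' : Differentiable ℝ (deriv φm))
    (hφmper : Function.Periodic φm c) (hφmpos : ∀ x, 0 < φm x)
    (heqm : ∀ x, deriv (deriv φm) x - b x * deriv φm x + (β + γ * b x) * φm x = km * φm x) :
    (kp - km) * (kp - (β + γ ^ 2)) = 0 := by
  set ν := fun y => deriv φp y + γ * φp y
  set μ := fun y => deriv φm y + -γ * φm y
  have hν x := hasDerivAt_deriv_add_mul (hφp x) (hφp' x) (heqp x)
  have hμ x := hasDerivAt_deriv_add_mul (b := fun x => -b x) (γ := -γ) (β := β) (k := km)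
    (hφm x) (hφm' x) (by linear_combination heqm x)
  set F := fun y => (kp - (β + γ ^ 2)) * (φp y * φm y) - ν y * μ y
  have hF x : HasDerivAt F ((kp - km) * (φm x * ν x)) x :=
    (((hφp x).hasDerivAt.mul (hφm x).hasDerivAt).const_mul _ |>.sub
      ((hν x).mul (hμ x))).congr_deriv (by ring)
  have hF' x : HasDerivAt (fun y => (kp - km) * (φm y * ν y))
      ((kp - km) * (deriv φm x * ν x + φm x * ((kp - (β + γ ^ 2)) * φp x - (b x - γ) * ν x))) x :=
    ((hφm x).hasDerivAt.mul (hν x)).const_mul _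
  refine eq_zero_of_periodic_of_deriv_deriv_eq_mul (F := F) (Q := fun x => φp x * φm x) ?_ hc ?_
    (fun x => mul_pos (hφppos x) (hφmpos x)) fun x hcrit => ?_
  · intro x
    simp only [F, ν, μ, hφpper x, hφmper x, hφpper.deriv x, hφmper.deriv x]
  · exact continuous_iff_continuousAt.2 fun x => (hF x).continuousAt
  · rw [(hF x).deriv, mul_left_comm, mul_eq_zero] at hcrit
    have hν₀ : (kp - km) * ν x = 0 := hcrit.resolve_left (hφmpos x).ne'
    rw [funext fun y => (hF y).deriv, (hF' x).deriv]
    linear_combination (deriv φm x - (b x - γ) * φm x) * hν₀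

theorem stmt3_general (b : ℝ → ℝ) (β γ : ℝ)
    (r : ℝ → ℝ) (hr : r = fun x => β + γ * b x)
    (φp φm : ℝ → ℝ) (kp km : ℝ)
    (hφp : ContDiff ℝ 2 φp) (hφpper : Function.Periodic φp 1) (hφppos : ∀ x, 0 < φp x)
    (heqp : ∀ x : ℝ,
      deriv (deriv φp) x + b x * deriv φp x + r x * φp x = kp * φp x)
    (hφm : ContDiff ℝ 2 φm) (hφmper : Function.Periodic φm 1) (hφmpos : ∀ x, 0 < φm x)
    (heqm : ∀ x : ℝ,
      deriv (deriv φm) x - b x * deriv φm x + r x * φm x = km * φm x) :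
    kp = km := by
  subst hr
  have hφpd := hφp.differentiable two_ne_zero
  have hφmd := hφm.differentiable two_ne_zero
  have hp := sub_mul_sub_eq_zero_of_periodic_eigenfunctions one_ne_zero
    hφpd hφp.differentiable_deriv_two hφpper hφppos heqp
    hφmd hφm.differentiable_deriv_two hφmper hφmpos heqm
  have hm := sub_mul_sub_eq_zero_of_periodic_eigenfunctions (b := fun x => -b x) (β := β) (γ := -γ)
    (kp := km) (km := kp)
    one_ne_zero hφmd hφm.differentiable_deriv_two hφmper hφmpos
    (fun x => by linear_combination heqm x)
    hφpd hφp.differentiable_deriv_two hφpper hφppos (fun x => by linear_combination heqp x)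
  have hsq : (kp - km) ^ 2 = 0 := by linear_combination hp + hm
  exact sub_eq_zero.mp (pow_eq_zero_iff two_ne_zero |>.mp hsq)

/-- If `r = β + γ b` with `b` of class `C¹` and `1`-periodic, then the principal
periodic eigenvalues of `ψ ↦ ψ'' + bψ' + rψ` and of `ψ ↦ ψ'' - bψ' + rψ` (characterized by
positive `1`-periodic eigenfunctions) coincide: `k⁺ = k⁻`. -/
theorem stmt3 (b : ℝ → ℝ) (β γ : ℝ)
    (hb : ContDiff ℝ 1 b) (hbper : Function.Periodic b 1)
    (r : ℝ → ℝ) (hr : r = fun x => β + γ * b x)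
    (φp φm : ℝ → ℝ) (kp km : ℝ)
    (hφp : ContDiff ℝ 2 φp) (hφpper : Function.Periodic φp 1) (hφppos : ∀ x, 0 < φp x)
    (heqp : ∀ x : ℝ,
      deriv (deriv φp) x + b x * deriv φp x + r x * φp x = kp * φp x)
    (hφm : ContDiff ℝ 2 φm) (hφmper : Function.Periodic φm 1) (hφmpos : ∀ x, 0 < φm x)
    (heqm : ∀ x : ℝ,
      deriv (deriv φm) x - b x * deriv φm x + r x * φm x = km * φm x) :
    kp = km :=
  stmt3_general b β γ r hr φp φm kp km hφp hφpper hφppos heqp hφm hφmper hφmpos heqm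
end

section
/- Let b : ℝ → ℝ be continuous and 1-periodic, let γ, k ∈ ℝ with γ ≠ 0, and let φ : ℝ → ℝ be twice continuously differentiable, 1-periodic, positive on ℝ, satisfying φ'' + b φ' + γ b φ = k φ on ℝ, and such that φ'(x) + γφ(x) > 0 for all x ∈ ℝ. Define g(x) := ∫₀ˣ (γφ'(y) + kφ(y)) / (φ'(y) + γφ(y)) dy and h(x) := ∫₀ˣ e^{−g(y)} / (φ'(y) + γφ(y)) dy. Then h(1) ≠ 0, and, setting C := (e^{−g(1)} − 1)/h(1), the function φ⁻(x) := e^{g(x)}(1 + C h(x)) is twice continuously differentiable, 1-periodic, positive on ℝ, and satisfies (φ⁻)'' − b (φ⁻)' + γ b φ⁻ = k φ⁻ on ℝ. -/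
/-!
Put `m = φ' + γφ` and `n = γφ' + kφ`. The equation for `φ` is equivalent to the first-order
system `m' = n - bm`, `n' = (k - γb)m`, and for any constant `C` a solution `ψ` of
`mψ' = nψ + C` satisfies `ψ'' - bψ' + γbψ = kψ`: differentiating and using the system gives
`m (ψ'' - bψ' - (k - γb)ψ) = 0`. Since `g' = n/m` and `h' = e^{-g}/m`, every
`ψ = e^g (1 + C h)` is such a solution.

Periodicity of `m` and `n` gives `g(x + 1) = g(x) + g(1)` and
`h(x + 1) = h(1) + e^{-g(1)} h(x)`, and `C` is exactly the constant making `ψ` periodic.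
As `h` increases from `h(0) = 0`, on `[0, 1]` the factor `1 + C h` lies between `1` and
`1 + C h(1) = e^{-g(1)}`, hence is positive.
-/

open Function Real

theorem contDiff_primitive {f : ℝ → ℝ} {n : ℕ∞} (hf : ContDiff ℝ n f) (a : ℝ) :
    ContDiff ℝ (n + 1) (fun x => ∫ t in a..x, f t) := by
  have hderiv : ∀ x, HasDerivAt (fun x => ∫ t in a..x, f t) (f x) x := fun x =>
    (hf.continuous.integral_hasStrictDerivAt a x).hasDerivAt
  rw [contDiff_succ_iff_deriv]
  refine ⟨fun x => (hderiv x).differentiableAt, by simp, ?_⟩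
  rwa [funext fun x => (hderiv x).deriv]

theorem intervalIntegral_zero_add_of_map_add {f : ℝ → ℝ} {T c : ℝ} (hf : Continuous f)
    (hfT : ∀ y, f (y + T) = c * f y) (x : ℝ) :
    ∫ y in (0 : ℝ)..x + T, f y =
      (∫ y in (0 : ℝ)..T, f y) + c * ∫ y in (0 : ℝ)..x, f y := by
  rw [← intervalIntegral.integral_add_adjacent_intervals (hf.intervalIntegrable 0 T)
    (hf.intervalIntegrable T (x + T)), ← intervalIntegral.integral_const_mul]
  simp_rw [← hfT, intervalIntegral.integral_comp_add_right, zero_add]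

section Eigenfunction

variable {b φ : ℝ → ℝ} {γ k x : ℝ}

theorem hasDerivAt_deriv_add_const_mul (hφ : DifferentiableAt ℝ φ x)
    (hφ' : DifferentiableAt ℝ (deriv φ) x)
    (heq : deriv (deriv φ) x + b x * deriv φ x + γ * b x * φ x = k * φ x) :
    HasDerivAt (fun y => deriv φ y + γ * φ y)
      (γ * deriv φ x + k * φ x - b x * (deriv φ x + γ * φ x)) x := by
  refine (hφ'.hasDerivAt.add (hφ.hasDerivAt.const_mul γ)).congr_deriv ?_
  linear_combination heq

theorem hasDerivAt_const_mul_deriv_add_const_mul (hφ : DifferentiableAt ℝ φ x)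
    (hφ' : DifferentiableAt ℝ (deriv φ) x)
    (heq : deriv (deriv φ) x + b x * deriv φ x + γ * b x * φ x = k * φ x) :
    HasDerivAt (fun y => γ * deriv φ y + k * φ y)
      ((k - γ * b x) * (deriv φ x + γ * φ x)) x := by
  refine ((hφ'.hasDerivAt.const_mul γ).add (hφ.hasDerivAt.const_mul k)).congr_deriv ?_
  linear_combination γ * heq

end Eigenfunction

theorem deriv_deriv_sub_mul_deriv_add_mul_eq {b m n ψ : ℝ → ℝ} {γ k C : ℝ}
    (hm : ∀ x, HasDerivAt m (n x - b x * m x) x)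
    (hn : ∀ x, HasDerivAt n ((k - γ * b x) * m x) x)
    (hm0 : ∀ x, m x ≠ 0) (hψ : ∀ x, HasDerivAt ψ ((n x * ψ x + C) / m x) x) (x : ℝ) :
    deriv (deriv ψ) x - b x * deriv ψ x + γ * b x * ψ x = k * ψ x := by
  have hψ' : deriv ψ = fun x => (n x * ψ x + C) / m x := funext fun x => (hψ x).deriv
  have hψ'' : HasDerivAt (fun x => (n x * ψ x + C) / m x) _ x :=
    (((hn x).mul (hψ x)).add_const C).div (hm x) (hm0 x)
  rw [hψ', hψ''.deriv, Pi.mul_apply]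
  field_simp [hm0 x]
  ring

section Transform

variable {g h m n : ℝ → ℝ} {C T x : ℝ}

theorem hasDerivAt_exp_mul_one_add_mul (hg : HasDerivAt g (n x / m x) x)
    (hh : HasDerivAt h (exp (-g x) / m x) x) (hm : m x ≠ 0) :
    HasDerivAt (fun y => exp (g y) * (1 + C * h y))
      ((n x * (exp (g x) * (1 + C * h x)) + C) / m x) x := by
  refine (hg.exp.mul ((hh.const_mul C).const_add 1)).congr_deriv ?_
  rw [exp_neg]
  field_simp

theorem periodic_exp_mul_one_add_mul (hg : ∀ x, g (x + T) = g x + g T)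
    (hh : ∀ x, h (x + T) = h T + exp (-g T) * h x) (hC : C * h T = exp (-g T) - 1) :
    Periodic (fun x => exp (g x) * (1 + C * h x)) T := by
  intro x
  have hinv : exp (g T) * exp (-g T) = 1 := by rw [← exp_add, add_neg_cancel, exp_zero]
  simp only [hg x, hh x, exp_add]
  linear_combination (exp (g x) * exp (g T)) * hC + exp (g x) * (1 + C * h x) * hinv

theorem exp_mul_one_add_mul_pos (hh : Monotone h) (h0 : h 0 = 0)
    (hC : C * h T = exp (-g T) - 1) (hx : x ∈ Set.Icc 0 T) :
    0 < exp (g x) * (1 + C * h x) := by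
  have hx0 : 0 ≤ h x := h0 ▸ hh hx.1
  have hxT : h x ≤ h T := hh hx.2
  have := exp_pos (-g T)
  refine mul_pos (exp_pos _) ?_
  rcases le_or_gt 0 C with hC0 | hC0 <;> nlinarith

end Transform

theorem exp_mul_one_add_mul_spec {m n g h ψ : ℝ → ℝ} {T C : ℝ} (hT : 0 < T)
    (hm : ContDiff ℝ 1 m) (hn : ContDiff ℝ 1 n) (hm_pos : ∀ x, 0 < m x)
    (hmT : Periodic m T) (hnT : Periodic n T)
    (hg : g = fun x => ∫ y in (0 : ℝ)..x, n y / m y)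
    (hh : h = fun x => ∫ y in (0 : ℝ)..x, exp (-g y) / m y)
    (hC : C = (exp (-g T) - 1) / h T) (hψ : ψ = fun x => exp (g x) * (1 + C * h x)) :
    h T ≠ 0 ∧ ContDiff ℝ 2 ψ ∧ Periodic ψ T ∧ (∀ x, 0 < ψ x) ∧
      ∀ x, HasDerivAt ψ ((n x * ψ x + C) / m x) x := by
  have hm0 x : m x ≠ 0 := (hm_pos x).ne'
  have hq : ContDiff ℝ 1 (fun x => n x / m x) := hn.div hm hm0
  have hg' x : HasDerivAt g (n x / m x) x := by
    rw [hg]; exact (hq.continuous.integral_hasStrictDerivAt 0 x).hasDerivAt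
  have hgT x : g (x + T) = g x + g T := by
    rw [hg, add_comm (∫ y in (0 : ℝ)..x, _)]
    simpa only [one_mul] using intervalIntegral_zero_add_of_map_add (c := 1) hq.continuous
      (fun y => by rw [one_mul, hmT y, hnT y]) x
  have hg2 : ContDiff ℝ 2 g := hg ▸ contDiff_primitive hq 0
  have hu : ContDiff ℝ 1 (fun x => exp (-g x) / m x) :=
    (contDiff_exp.comp (hg2.of_le one_le_two).neg).div hm hm0
  have hh' x : HasDerivAt h (exp (-g x) / m x) x := by
    rw [hh]; exact (hu.continuous.integral_hasStrictDerivAt 0 x).hasDerivAt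
  have hhT x : h (x + T) = h T + exp (-g T) * h x := by
    rw [hh]
    exact intervalIntegral_zero_add_of_map_add hu.continuous (fun y => by
      rw [hgT y, hmT y, neg_add, exp_add]; ring) x
  have hmono : StrictMono h :=
    strictMono_of_hasDerivAt_pos hh' fun x => div_pos (exp_pos _) (hm_pos x)
  have h0 : h 0 = 0 := by simp [hh]
  have hhT0 : h T ≠ 0 := (h0 ▸ hmono hT).ne'
  have hCh : C * h T = exp (-g T) - 1 := by rw [hC]; field_simp
  subst hψ
  have hψT := periodic_exp_mul_one_add_mul hgT hhT hCh
  refine ⟨hhT0, ?_, hψT, fun x => ?_, fun x =>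
    hasDerivAt_exp_mul_one_add_mul (hg' x) (hh' x) (hm0 x)⟩
  · exact (contDiff_exp.comp hg2).mul
      (contDiff_const.add (contDiff_const.mul (hh ▸ contDiff_primitive hu 0)))
  · obtain ⟨y, hy, hxy⟩ := hψT.exists_mem_Ico₀ hT x
    beta_reduce
    exact hxy ▸ exp_mul_one_add_mul_pos hmono.monotone h0 hCh (Set.Ico_subset_Icc_self hy)

theorem stmt6_general (b : ℝ → ℝ) (γ k : ℝ) (φ : ℝ → ℝ)
    (hφ : ContDiff ℝ 2 φ) (hφper : Function.Periodic φ 1)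
    (heq : ∀ x : ℝ,
      deriv (deriv φ) x + b x * deriv φ x + γ * b x * φ x = k * φ x)
    (hm : ∀ x : ℝ, 0 < deriv φ x + γ * φ x)
    (g h : ℝ → ℝ)
    (hg : g = fun x => ∫ y in (0:ℝ)..x,
      (γ * deriv φ y + k * φ y) / (deriv φ y + γ * φ y))
    (hh : h = fun x => ∫ y in (0:ℝ)..x,
      Real.exp (-g y) / (deriv φ y + γ * φ y))
    (C : ℝ) (hC : C = (Real.exp (-g 1) - 1) / h 1)
    (φm : ℝ → ℝ) (hφm : φm = fun x => Real.exp (g x) * (1 + C * h x)) :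
    h 1 ≠ 0 ∧
    ContDiff ℝ 2 φm ∧
    Function.Periodic φm 1 ∧
    (∀ x : ℝ, 0 < φm x) ∧
    (∀ x : ℝ,
      deriv (deriv φm) x - b x * deriv φm x + γ * b x * φm x = k * φm x) := by
  set m : ℝ → ℝ := fun x => deriv φ x + γ * φ x
  set n : ℝ → ℝ := fun x => γ * deriv φ x + k * φ x
  have hφ1 : ContDiff ℝ 1 φ := hφ.of_le one_le_two
  have hφ' : ContDiff ℝ 1 (deriv φ) := hφ.deriv'
  have hφ'per : Periodic (deriv φ) 1 := fun x => by
    rw [← deriv_comp_add_const, hφper.funext]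
  have hm' x : HasDerivAt m (n x - b x * m x) x := hasDerivAt_deriv_add_const_mul
    (hφ1.differentiable one_ne_zero x) (hφ'.differentiable one_ne_zero x) (heq x)
  have hn' x : HasDerivAt n ((k - γ * b x) * m x) x := hasDerivAt_const_mul_deriv_add_const_mul
    (hφ1.differentiable one_ne_zero x) (hφ'.differentiable one_ne_zero x) (heq x)
  obtain ⟨hh1, hφm2, hφmper, hφmpos, hφm'⟩ := exp_mul_one_add_mul_spec one_pos
    (hφ'.add (contDiff_const.mul hφ1)) ((contDiff_const.mul hφ').add (contDiff_const.mul hφ1))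
    hm (fun x => by simp only [hφper x, hφ'per x]) (fun x => by simp only [hφper x, hφ'per x])
    hg hh hC hφm
  exact ⟨hh1, hφm2, hφmper, hφmpos,
    deriv_deriv_sub_mul_deriv_add_mul_eq hm' hn' (fun x => (hm x).ne') hφm'⟩

/-- the explicit transformation producing from a positive `1`-periodic principal
eigenfunction `φ` of `ψ ↦ ψ'' + bψ' + γbψ` a positive `1`-periodic principal eigenfunction
`φ⁻(x) = e^{g(x)}(1 + C h(x))` of `ψ ↦ ψ'' - bψ' + γbψ` with the same eigenvalue `k`. -/
theorem stmt6 (b : ℝ → ℝ) (γ k : ℝ) (φ : ℝ → ℝ)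
    (hb : Continuous b) (hbper : Function.Periodic b 1) (hγ : γ ≠ 0)
    (hφ : ContDiff ℝ 2 φ) (hφper : Function.Periodic φ 1) (hφpos : ∀ x, 0 < φ x)
    (heq : ∀ x : ℝ,
      deriv (deriv φ) x + b x * deriv φ x + γ * b x * φ x = k * φ x)
    (hm : ∀ x : ℝ, 0 < deriv φ x + γ * φ x)
    (g h : ℝ → ℝ)
    (hg : g = fun x => ∫ y in (0:ℝ)..x,
      (γ * deriv φ y + k * φ y) / (deriv φ y + γ * φ y))
    (hh : h = fun x => ∫ y in (0:ℝ)..x,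
      Real.exp (-g y) / (deriv φ y + γ * φ y))
    (C : ℝ) (hC : C = (Real.exp (-g 1) - 1) / h 1)
    (φm : ℝ → ℝ) (hφm : φm = fun x => Real.exp (g x) * (1 + C * h x)) :
    h 1 ≠ 0 ∧
    ContDiff ℝ 2 φm ∧
    Function.Periodic φm 1 ∧
    (∀ x : ℝ, 0 < φm x) ∧
    (∀ x : ℝ,
      deriv (deriv φm) x - b x * deriv φm x + γ * b x * φm x = k * φm x) :=
  stmt6_general b γ k φ hφ hφper heq hm g h hg hh C hC φm hφm
end
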